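/- arXiv:2303.17739 — 2 statements merged into one kernel-verified Lean document; each statement's English description precedes it below -/
import Mathlib

section
/- Let M be a compact metric space and G a group of homeomorphisms of M acting transitively on M, and let f : M → M be a homeomorphism commuting with every element of G. Suppose that for every ε > 0 there is δ > 0 such that for all x, x' ∈ M with dist(x, x') < δ there exists φ ∈ G with φ(x) = x' and dist_{C⁰}(φ, id) < ε and dist_{C⁰}(φ⁻¹, id) < ε. Then the family of iterates {fⁿ : n ∈ ℤ} is uniformly equicontinuous. -/
/-! An element `φ ∈ G` carrying `x` to `y` commutes with every iterate `fⁿ`, so it carries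
`fⁿ x` to `fⁿ y`; if `φ` is `ε`-close to the identity, then `fⁿ x` and `fⁿ y` are `ε`-close. -/

theorem Equiv.Perm.dist_zpow_apply_lt_of_commute {M : Type*} [PseudoMetricSpace M]
    {f φ : Equiv.Perm M} (hc : Commute φ f) {ε : ℝ} (hφ : ∀ y, dist (φ y) y < ε)
    (n : ℤ) (x : M) : dist ((f ^ n) x) ((f ^ n) (φ x)) < ε := by
  have hφn : (f ^ n) (φ x) = φ ((f ^ n) x) := by
    rw [← Equiv.Perm.mul_apply, ← (hc.zpow_right n).eq, Equiv.Perm.mul_apply]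
  rw [hφn, dist_comm]
  exact hφ _

theorem stmt4_general {M : Type*} [MetricSpace M]
    (f : M ≃ₜ M) (G : Set (M ≃ₜ M))
    (hcomm : ∀ φ ∈ G, ∀ x : M, φ (f x) = f (φ x))
    (hclose : ∀ ε > (0 : ℝ), ∃ δ > (0 : ℝ), ∀ x x' : M, dist x x' < δ →
      ∃ φ ∈ G, φ x = x' ∧ (∀ y : M, dist (φ y) y < ε) ∧
        (∀ y : M, dist (φ.symm y) y < ε)) :
    ∀ ε > (0 : ℝ), ∃ δ > (0 : ℝ), ∀ (n : ℤ) (x y : M), dist x y < δ →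
      dist ((f.toEquiv ^ n) x) ((f.toEquiv ^ n) y) < ε := by
  intro ε hε
  obtain ⟨δ, hδ, hmove⟩ := hclose ε hε
  refine ⟨δ, hδ, fun n x y hxy => ?_⟩
  obtain ⟨φ, hφG, rfl, hφε, -⟩ := hmove x y hxy
  have hc : Commute φ.toEquiv f.toEquiv := Equiv.ext (hcomm φ hφG)
  exact Equiv.Perm.dist_zpow_apply_lt_of_commute hc hφε n x

/-- If a group `G` of homeomorphisms of a compact metric space `M` acts
transitively, commutes with a homeomorphism `f`, and nearby points can be
mapped to each other by elements of `G` that are uniformly `C⁰`-close to the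
identity (together with their inverses), then the family of iterates
`{fⁿ : n ∈ ℤ}` is uniformly equicontinuous. -/
theorem stmt4 {M : Type*} [MetricSpace M] [CompactSpace M]
    (f : M ≃ₜ M) (G : Set (M ≃ₜ M))
    (hgrp : (∀ φ ∈ G, ∀ ψ ∈ G, φ.trans ψ ∈ G) ∧ ∀ φ ∈ G, φ.symm ∈ G)
    (hcomm : ∀ φ ∈ G, ∀ x : M, φ (f x) = f (φ x))
    (htrans : ∀ x y : M, ∃ φ ∈ G, φ x = y)
    (hclose : ∀ ε > (0 : ℝ), ∃ δ > (0 : ℝ), ∀ x x' : M, dist x x' < δ →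
      ∃ φ ∈ G, φ x = x' ∧ (∀ y : M, dist (φ y) y < ε) ∧
        (∀ y : M, dist (φ.symm y) y < ε)) :
    ∀ ε > (0 : ℝ), ∃ δ > (0 : ℝ), ∀ (n : ℤ) (x y : M), dist x y < δ →
      dist ((f.toEquiv ^ n) x) ((f.toEquiv ^ n) y) < ε :=
  stmt4_general f G hcomm hclose
end

section
/- Let A be a compact metrizable topological space, B a locally compact Hausdorff space, and Φ : A → B a continuous map. Call a point x ∈ A regular if for every open neighborhood V of x, Φ(x) lies in the interior of Φ(V); call y ∈ B a regular value if every point of Φ⁻¹(y) is regular. Then the set of regular values of Φ is residual (comeager) in B. -/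
/-!
For a closed map `Φ` and each basic open set `U` of `A`, the set `Φ '' closure U` is closed, so
its frontier is closed and nowhere dense. A value `y` outside all these countably many frontiers
lies in the interior of every `Φ '' closure U` it belongs to, and since in a regular space the
closures of basic neighbourhoods of `x` form a neighbourhood basis of `x`, every point of
`Φ ⁻¹' {y}` is regular.
-/

open TopologicalSpace Set

section

variable {A B : Type*} [TopologicalSpace A] [TopologicalSpace B]

def IsRegularPoint (Φ : A → B) (x : A) : Prop :=
  ∀ V : Set A, IsOpen V → x ∈ V → Φ x ∈ interior (Φ '' V)

theorem IsClosed.compl_frontier_mem_residual {s : Set B} (hs : IsClosed s) :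
    (frontier s)ᶜ ∈ residual B :=
  residual_of_dense_open isClosed_frontier.isOpen_compl
    (interior_eq_empty_iff_dense_compl.mp (interior_frontier hs))

theorem TopologicalSpace.IsTopologicalBasis.isRegularPoint_of_forall_mem [RegularSpace A]
    {𝒰 : Set (Set A)} (h𝒰 : IsTopologicalBasis 𝒰) {Φ : A → B} {x : A}
    (hx : ∀ U ∈ 𝒰, x ∈ U → Φ x ∈ interior (Φ '' closure U)) : IsRegularPoint Φ x := by
  intro V hV hxV
  obtain ⟨U, hU, hxU, hUV⟩ := h𝒰.exists_closure_subset (hV.mem_nhds hxV)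
  exact interior_mono (image_mono hUV) (hx U hU hxU)

theorem IsClosedMap.setOf_forall_isRegularPoint_mem_residual [RegularSpace A]
    [SecondCountableTopology A] {Φ : A → B} (hΦ : IsClosedMap Φ) :
    {y | ∀ x ∈ Φ ⁻¹' {y}, IsRegularPoint Φ x} ∈ residual B := by
  have hres : (⋂ U ∈ countableBasis A, (frontier (Φ '' closure U))ᶜ) ∈ residual B :=
    (countable_bInter_mem (countable_countableBasis A)).mpr fun U _ ↦
      (hΦ _ isClosed_closure).compl_frontier_mem_residual
  refine Filter.mem_of_superset hres fun y hy x hx ↦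
    (isBasis_countableBasis A).isRegularPoint_of_forall_mem fun U hU hxU ↦ ?_
  rw [mem_preimage, mem_singleton_iff] at hx
  subst hx
  exact (mem_interior_iff_notMem_frontier (mem_image_of_mem Φ (subset_closure hxU))).mpr
    (mem_iInter₂.mp hy U hU)

end

theorem stmt7_general {A B : Type*} [TopologicalSpace A] [CompactSpace A]
    [TopologicalSpace.MetrizableSpace A]
    [TopologicalSpace B] [T2Space B]
    (Φ : A → B) (hΦ : Continuous Φ) :
    {y : B | ∀ x ∈ Φ ⁻¹' {y}, ∀ V : Set A, IsOpen V → x ∈ V →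
      Φ x ∈ interior (Φ '' V)} ∈ residual B :=
  hΦ.isClosedMap.setOf_forall_isRegularPoint_mem_residual

/-- (Avila–Santamaria–Viana) For a continuous map `Φ` from a compact
metrizable space to a locally compact Hausdorff space, the set of regular
values of `Φ` is residual. -/
theorem stmt7 {A B : Type*} [TopologicalSpace A] [CompactSpace A]
    [TopologicalSpace.MetrizableSpace A]
    [TopologicalSpace B] [LocallyCompactSpace B] [T2Space B]
    (Φ : A → B) (hΦ : Continuous Φ) :
    {y : B | ∀ x ∈ Φ ⁻¹' {y}, ∀ V : Set A, IsOpen V → x ∈ V →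
      Φ x ∈ interior (Φ '' V)} ∈ residual B :=
  stmt7_general Φ hΦ
end
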